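/- Let i ∈ N be a buyer, ξ ∈ ℝ_{≥0}^{E_i} with ξ(E_i) ≤ d_i, and u ∈ ℝ_{≥0}^{N−i}. Then u ∈ P^i_{w,d}(ξ) if and only if for every Y ⊆ N−i it holds that u(Y) ≤ min_{Z ⊆ Y, F ⊆ E_i} ( f_w(E_Z ∪ F) + d(Y \ Z) − ξ(F) ). -/

import Mathlib

open Finset

noncomputable section

namespace TwoSidedMarket

variable {B S : Type*} [Fintype B] [Fintype S] [DecidableEq B] [DecidableEq S]

/-- A function `f` on subsets of a ground set `G` is monotone submodular:
`f ∅ = 0`, monotone on subsets of `G`, and submodular on subsets of `G`. -/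
def IsMonoSubmodular {α : Type*} [DecidableEq α] (G : Finset α) (f : Finset α → ℝ) : Prop :=
  f ∅ = 0 ∧ (∀ A B : Finset α, A ⊆ B → B ⊆ G → f A ≤ f B) ∧
    ∀ A B : Finset α, A ⊆ G → B ⊆ G → f (A ∩ B) + f (A ∪ B) ≤ f A + f B

/-- Monotone submodular, without the requirement of vanishing at `∅`. -/
def IsMonoSubmodularWeak {α : Type*} [DecidableEq α] (G : Finset α) (f : Finset α → ℝ) : Prop :=
  (∀ A B : Finset α, A ⊆ B → B ⊆ G → f A ≤ f B) ∧
    ∀ A B : Finset α, A ⊆ G → B ⊆ G → f (A ∩ B) + f (A ∪ B) ≤ f A + f B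

/-- `E_i`: the edges of `E` incident to buyer `i`. -/
def Ei (E : Finset (B × S)) (i : B) : Finset (B × S) := E.filter fun e => e.1 = i

/-- `E_j`: the edges of `E` incident to seller `j`. -/
def Ej (E : Finset (B × S)) (j : S) : Finset (B × S) := E.filter fun e => e.2 = j

/-- `E_X`: the edges of `E` incident to some buyer in `X`. -/
def EX (E : Finset (B × S)) (X : Finset B) : Finset (B × S) := E.filter fun e => e.1 ∈ X

/-- `N_F`: the buyers incident to some edge of `F`. -/
def NF (F : Finset (B × S)) : Finset B := F.image Prod.fst

/-- `x(F) = Σ_{e ∈ F} x e`. -/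
def vsum (x : B × S → ℝ) (F : Finset (B × S)) : ℝ := ∑ e ∈ F, x e

/-- Membership `w ∈ P = ⊕_j P_j`: `w` is nonnegative, supported on `E`, and
`w|_{E_j} ∈ P_j` for every seller `j`. -/
def memP (E : Finset (B × S)) (fj : S → Finset (B × S) → ℝ) (w : B × S → ℝ) : Prop :=
  (∀ e, 0 ≤ w e) ∧ (∀ e ∉ E, w e = 0) ∧ ∀ j : S, ∀ F ⊆ Ej E j, vsum w F ≤ fj j F

/-- `f(F) := Σ_{j ∈ M} f_j (E_j ∩ F)`. -/
def fTot (E : Finset (B × S)) (fj : S → Finset (B × S) → ℝ) (F : Finset (B × S)) : ℝ :=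
  ∑ j : S, fj j (Ej E j ∩ F)

/-- `f_w(F) := min_{F ⊆ F' ⊆ E} (f(F') - w(F'))`. -/
def fw (E : Finset (B × S)) (fj : S → Finset (B × S) → ℝ)
    (w : B × S → ℝ) (F : Finset (B × S)) : ℝ :=
  sInf {r : ℝ | ∃ F' : Finset (B × S), F ⊆ F' ∧ F' ⊆ E ∧ r = fTot E fj F' - vsum w F'}

/-- Membership in the remnant supply polytope `P_{w,d}`. -/
def memPwd (E : Finset (B × S)) (fj : S → Finset (B × S) → ℝ)
    (w : B × S → ℝ) (d : B → ℝ) (x : B × S → ℝ) : Prop :=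
  (∀ e, 0 ≤ x e) ∧ (∀ e ∉ E, x e = 0) ∧ memP E fj (w + x) ∧
    ∀ i : B, vsum x (Ei E i) ≤ d i

/-- `f_{w,d}(F) := max_{x ∈ P_{w,d}} x(F)`. -/
def fwd (E : Finset (B × S)) (fj : S → Finset (B × S) → ℝ)
    (w : B × S → ℝ) (d : B → ℝ) (F : Finset (B × S)) : ℝ :=
  sSup {r : ℝ | ∃ x : B × S → ℝ, memPwd E fj w d x ∧ r = vsum x F}

/-- `P^i_{w,d}(ξ)`: the remnant supply polytope of the buyers other than `i`,
given that buyer `i` receives `ξ`.  (Vectors indexed by `N - i` are encoded as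
functions on all of `B` vanishing at `i`.) -/
def PiWd (E : Finset (B × S)) (fj : S → Finset (B × S) → ℝ)
    (w : B × S → ℝ) (d : B → ℝ) (i : B) (ξ : B × S → ℝ) : Set (B → ℝ) :=
  {u | u i = 0 ∧ (∀ k, 0 ≤ u k) ∧
    ∃ x : B × S → ℝ, memPwd E fj w d x ∧ (∀ e ∈ Ei E i, x e = ξ e) ∧
      ∀ k : B, k ≠ i → vsum x (Ei E k) = u k}

/-- The clinching polytope `P^i_{w,d}` of buyer `i`:
all `ξ ∈ ℝ_{≥0}^{E_i}` with `P^i_{w,d}(ξ) = P^i_{w,d}(0)`. -/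
def ClinchP (E : Finset (B × S)) (fj : S → Finset (B × S) → ℝ)
    (w : B × S → ℝ) (d : B → ℝ) (i : B) : Set (B × S → ℝ) :=
  {ξ | (∀ e, 0 ≤ ξ e) ∧ (∀ e ∉ Ei E i, ξ e = 0) ∧
    PiWd E fj w d i ξ = PiWd E fj w d i 0}

end TwoSidedMarket

/-!
The inequalities are necessary: if `w + x ∈ P` then `x(F) ≤ f_w(F)`, and a witness `x` for `u`
satisfies `u(Y) = x(E_Z ∪ F) - ξ(F) + u(Y \ Z)` with `u_k ≤ d_k`.

For sufficiency, partition the edges into blocks: one block `E_k` for each buyer `k ≠ i` and a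
singleton block for each edge of `i`, with prescribed totals `u_k` and `ξ_e`. The inequalities
with `Z = Y` say that every union of blocks gets a total at most its `f_w`-value. Since `f_w` is
monotone submodular, a vector of the polymatroid `P(f_w)` with these block sums exists, and
`x ∈ P(f_w)` is exactly `w + x ∈ P`; the case `Y = {k}`, `Z = F = ∅` gives `u_k ≤ d_k`.

The block-sum vector is built by induction on the ground set. A new element `e` receives the
largest excess `α = y(T) - g(G_T)` (or `0`) over the block sets `T` containing its block, where
`G_T` is the part of the old ground set covered by `T`. Submodularity keeps `α` below `y(blk e)`,
`g {e}` and every `g(G_T + e) - y(T)` with `blk e ∉ T`, so the remaining demands are feasible for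
the truncation `F ↦ min (g F) (g (F + e) - α)`, which is again monotone submodular.
-/

namespace TwoSidedMarket.IsMonoSubmodular

variable {ε : Type*} [DecidableEq ε] {G : Finset ε} {g : Finset ε → ℝ} {e : ε}

theorem truncate (hg : IsMonoSubmodular (insert e G) g) (he : e ∉ G) {α : ℝ} (hα : α ≤ g {e}) :
    IsMonoSubmodular G fun F => min (g F) (g (insert e F) - α) := by
  obtain ⟨hg0, hmono, hsub⟩ := hg
  refine ⟨by simp [hg0, hα], fun A C hAC hC => ?_, fun A C hA hC => ?_⟩
  · exact min_le_min (hmono A C hAC (hC.trans (subset_insert e G)))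
      (sub_le_sub_right (hmono _ _ (insert_subset_insert e hAC) (insert_subset_insert e hC)) α)
  have heA : e ∉ A := fun h => he (hA h)
  have heC : e ∉ C := fun h => he (hC h)
  have hAG := hA.trans (subset_insert e G)
  have hCG := hC.trans (subset_insert e G)
  have heAG := insert_subset_insert e hA
  have heCG := insert_subset_insert e hC
  have h₁ := hsub A C hAG hCG
  have h₂ := hsub A (insert e C) hAG heCG
  have h₃ := hsub (insert e A) C heAG hCG
  have h₄ := hsub (insert e A) (insert e C) heAG heCG
  rw [inter_insert_of_notMem heA, union_insert] at h₂
  rw [insert_inter_of_notMem heC, insert_union] at h₃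
  rw [← insert_inter_distrib, ← insert_union_distrib] at h₄
  -- as `e ∉ A ∪ C`, each choice of minimisers at `A` and `C` is bounded by one of `h₁`–`h₄`
  beta_reduce
  rcases min_choice (g A) (g (insert e A) - α) with hA' | hA' <;>
    rcases min_choice (g C) (g (insert e C) - α) with hC' | hC' <;>
    · rw [hA', hC']
      linarith [min_le_left (g (A ∩ C)) (g (insert e (A ∩ C)) - α),
        min_le_right (g (A ∩ C)) (g (insert e (A ∩ C)) - α),
        min_le_left (g (A ∪ C)) (g (insert e (A ∪ C)) - α),
        min_le_right (g (A ∪ C)) (g (insert e (A ∪ C)) - α)]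

theorem sum_add_single_le_of_truncate (he : e ∉ G) {α : ℝ} {x : ε → ℝ}
    (hxG : ∀ a ∉ G, x a = 0) (hx : ∀ D ⊆ G, ∑ a ∈ D, x a ≤ min (g D) (g (insert e D) - α)) :
    ∀ D ⊆ insert e G, ∑ a ∈ D, (x + Pi.single e α : ε → ℝ) a ≤ g D := by
  intro D hD
  simp only [Pi.add_apply, sum_add_distrib, sum_pi_single']
  by_cases heD : e ∈ D
  · have hDe : D.erase e ⊆ G := fun a ha => by
      obtain ⟨hae, haD⟩ := mem_erase.mp ha
      exact (mem_insert.mp (hD haD)).resolve_left hae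
    have := (hx _ hDe).trans (min_le_right _ _)
    rw [sum_erase D (hxG e he), insert_erase heD] at this
    rw [if_pos heD]
    linarith
  · have hDG : D ⊆ G := fun a ha =>
      (mem_insert.mp (hD ha)).resolve_left (ne_of_mem_of_not_mem ha heD)
    rw [if_neg heD, add_zero]
    exact (hx D hDG).trans (min_le_left _ _)

variable {τ : Type*} [DecidableEq τ] {blk : ε → τ} {y : τ → ℝ}

theorem sum_sub_le_apply (hg : IsMonoSubmodular (insert e G) g)
    (hyg : ∀ T : Finset τ, ∑ t ∈ T, y t ≤ g ((insert e G).filter (blk · ∈ T)))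
    {T : Finset τ} (hT : blk e ∈ T) :
    ∑ t ∈ T, y t - g (G.filter (blk · ∈ T)) ≤ y (blk e) := by
  have h := hyg (T.erase (blk e))
  rw [filter_insert, if_neg (notMem_erase _ _)] at h
  have hmono := hg.2.1 (G.filter (blk · ∈ T.erase (blk e))) (G.filter (blk · ∈ T))
    (monotone_filter_right G fun _ _ => mem_of_mem_erase)
    (filter_subset _ _ |>.trans (subset_insert e G))
  rw [← add_sum_erase T y hT]
  linarith

theorem sum_sub_le_singleton (hg : IsMonoSubmodular (insert e G) g) (he : e ∉ G)
    (hyg : ∀ T : Finset τ, ∑ t ∈ T, y t ≤ g ((insert e G).filter (blk · ∈ T)))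
    {T : Finset τ} (hT : blk e ∈ T) :
    ∑ t ∈ T, y t - g (G.filter (blk · ∈ T)) ≤ g {e} := by
  have h := hyg T
  rw [filter_insert, if_pos hT] at h
  have hsub := hg.2.2 {e} (G.filter (blk · ∈ T)) (by simp)
    (filter_subset _ _ |>.trans (subset_insert e G))
  rw [singleton_inter_of_notMem fun h => he (mem_of_mem_filter e h), ← insert_eq, hg.1] at hsub
  linarith

theorem sum_sub_le_sub_sum (hg : IsMonoSubmodular (insert e G) g) (he : e ∉ G)
    (hyg : ∀ T : Finset τ, ∑ t ∈ T, y t ≤ g ((insert e G).filter (blk · ∈ T)))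
    {T₁ T₂ : Finset τ} (hT₁ : blk e ∈ T₁) (hT₂ : blk e ∉ T₂) :
    ∑ t ∈ T₁, y t - g (G.filter (blk · ∈ T₁)) ≤
      g (insert e (G.filter (blk · ∈ T₂))) - ∑ t ∈ T₂, y t := by
  have hsub := hg.2.2 (G.filter (blk · ∈ T₁)) (insert e (G.filter (blk · ∈ T₂)))
    (filter_subset _ _ |>.trans (subset_insert e G)) (insert_subset_insert e (filter_subset _ _))
  rw [inter_insert_of_notMem fun h => he (mem_of_mem_filter e h), union_insert, ← filter_and,
    ← filter_or] at hsub
  have hinter := hyg (T₁ ∩ T₂)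
  rw [filter_insert, if_neg fun h => hT₂ (mem_inter.mp h).2] at hinter
  have hunion := hyg (T₁ ∪ T₂)
  rw [filter_insert, if_pos (mem_union_left _ hT₁)] at hunion
  simp only [mem_inter, mem_union] at hinter hunion
  linarith [sum_union_inter (s₁ := T₁) (s₂ := T₂) (f := y)]

theorem exists_residual_feasible [Fintype τ] (hg : IsMonoSubmodular (insert e G) g) (he : e ∉ G)
    (hy : ∀ t, 0 ≤ y t)
    (hyg : ∀ T : Finset τ, ∑ t ∈ T, y t ≤ g ((insert e G).filter (blk · ∈ T))) :
    ∃ α, 0 ≤ α ∧ α ≤ y (blk e) ∧ α ≤ g {e} ∧ ∀ T : Finset τ,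
      ∑ t ∈ T, (y - Pi.single (blk e) α : τ → ℝ) t ≤
        min (g (G.filter (blk · ∈ T))) (g (insert e (G.filter (blk · ∈ T))) - α) := by
  set L := fun T : Finset τ => ∑ t ∈ T, y t - g (G.filter (blk · ∈ T))
  have hne : (univ.filter (blk e ∈ ·)).Nonempty :=
    ⟨{blk e}, mem_filter.mpr ⟨mem_univ _, mem_singleton_self _⟩⟩
  set α := max 0 ((univ.filter (blk e ∈ ·)).sup' hne L)
  have le_α : ∀ T, blk e ∈ T → L T ≤ α := fun T hT =>
    le_max_of_le_right (le_sup' L (by simpa using hT))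
  have α_le : ∀ c, 0 ≤ c → (∀ T, blk e ∈ T → L T ≤ c) → α ≤ c := fun c h0 h =>
    max_le h0 (sup'_le _ _ fun T hT => h T (by simpa using hT))
  have hge : 0 ≤ g {e} := hg.1 ▸ hg.2.1 ∅ {e} (empty_subset _) (by simp)
  refine ⟨α, le_max_left _ _, α_le _ (hy _) fun T => hg.sum_sub_le_apply hyg,
    α_le _ hge fun T => hg.sum_sub_le_singleton he hyg, fun T => ?_⟩
  simp only [Pi.sub_apply, sum_sub_distrib, sum_pi_single']
  have h := hyg T
  rw [filter_insert] at h
  split_ifs at h ⊢ with hT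
  · exact le_min (by linarith [le_α T hT]) (by linarith)
  · have hmono := hg.2.1 _ (insert e (G.filter (blk · ∈ T))) (subset_insert _ _)
      (insert_subset_insert e (filter_subset _ _))
    refine le_min (by linarith) ?_
    have hα := α_le _ (by linarith) fun T₁ hT₁ => hg.sum_sub_le_sub_sum he hyg hT₁ hT
    linarith

theorem exists_sum_filter_eq [Fintype τ] (hg : IsMonoSubmodular G g)
    (hy : ∀ t, 0 ≤ y t) (hyg : ∀ T : Finset τ, ∑ t ∈ T, y t ≤ g (G.filter (blk · ∈ T))) :
    ∃ x : ε → ℝ, (∀ a, 0 ≤ x a) ∧ (∀ a ∉ G, x a = 0) ∧ (∀ D ⊆ G, ∑ a ∈ D, x a ≤ g D) ∧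
      ∀ t, ∑ a ∈ G.filter (blk · = t), x a = y t := by
  induction G using Finset.induction_on generalizing g y with
  | empty =>
    refine ⟨0, fun _ => le_rfl, fun _ _ => rfl, fun D hD => by simp [subset_empty.mp hD, hg.1],
      fun t => ?_⟩
    have := hyg {t}
    simp only [sum_singleton, filter_empty, hg.1] at this
    simpa using le_antisymm (hy t) this
  | insert e G he ih =>
    obtain ⟨α, hα0, hαy, hαe, hres⟩ := hg.exists_residual_feasible he hy hyg
    have hy' : ∀ t, 0 ≤ (y - Pi.single (blk e) α : τ → ℝ) t := fun t => by
      rcases eq_or_ne t (blk e) with rfl | ht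
      · simpa using hαy
      · simpa [ht] using hy t
    obtain ⟨x, hx0, hxG, hxg, hxy⟩ := ih (hg.truncate he hαe) hy' hres
    have hsingle : 0 ≤ (Pi.single e α : ε → ℝ) := Pi.single_nonneg.mpr hα0
    refine ⟨x + Pi.single e α, fun a => add_nonneg (hx0 a) (hsingle a), fun a ha => ?_,
      sum_add_single_le_of_truncate he hxG hxg, fun t => ?_⟩
    · have hae : a ≠ e := fun h => ha (h ▸ mem_insert_self e G)
      simp [hxG a fun h => ha (mem_insert_of_mem h), hae]
    · have heG : e ∉ G.filter (blk · = t) := fun h => he (mem_of_mem_filter e h)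
      simp only [Pi.add_apply, sum_add_distrib, sum_pi_single', filter_insert]
      by_cases ht : blk e = t
      · subst ht
        rw [if_pos rfl, sum_insert heG, hxG e he, zero_add, hxy, if_pos (mem_insert_self _ _)]
        simp
      · rw [if_neg ht, if_neg heG, hxy, add_zero]
        simp [Ne.symm ht]

end TwoSidedMarket.IsMonoSubmodular

namespace TwoSidedMarket

section Market

variable {B S : Type*} {E : Finset (B × S)}

theorem vsum_add (x y : B × S → ℝ) (F : Finset (B × S)) :
    vsum (x + y) F = vsum x F + vsum y F :=
  sum_add_distrib

variable [DecidableEq B]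

theorem vsum_EX (x : B × S → ℝ) (Z : Finset B) :
    vsum x (EX E Z) = ∑ k ∈ Z, vsum x (Ei E k) := by
  rw [vsum, EX, ← sum_fiberwise_of_maps_to (g := Prod.fst) fun e he => (mem_filter.mp he).2]
  refine sum_congr rfl fun k hk => ?_
  rw [vsum, Ei, filter_filter]
  exact congrArg (∑ e ∈ ·, x e) (filter_congr fun e _ => ⟨And.right, fun h => ⟨h ▸ hk, h⟩⟩)

variable [DecidableEq S]

def blockOf (i : B) (e : B × S) : B ⊕ (B × S) := if e.1 = i then .inr e else .inl e.1

theorem filter_blockOf_mem (i : B) (T : Finset (B ⊕ (B × S))) :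
    E.filter (blockOf i · ∈ T) = EX E (T.toLeft.erase i) ∪ (T.toRight ∩ Ei E i) := by
  ext e
  simp only [mem_filter, mem_union, mem_inter, EX, Ei, mem_erase, mem_toLeft, mem_toRight]
  by_cases he : e.1 = i <;> simp [blockOf, he, and_comm]

theorem filter_blockOf_eq_inl {i k : B} (hk : k ≠ i) :
    E.filter (blockOf i · = .inl k) = Ei E k := by
  ext e
  simp only [mem_filter, Ei]
  by_cases he : e.1 = i <;> simp [blockOf, he, Ne.symm hk]

theorem filter_blockOf_eq_inr {i : B} {e : B × S} (he : e ∈ Ei E i) :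
    E.filter (blockOf i · = .inr e) = {e} := by
  ext a
  simp only [mem_filter, mem_singleton]
  by_cases ha : a.1 = i <;> simp [blockOf, ha]
  · rintro rfl
    exact (mem_filter.mp he).1
  · rintro rfl
    exact ha (mem_filter.mp he).2

variable [Fintype S] {fj : S → Finset (B × S) → ℝ}

theorem vsum_le_fTot_of_memP {x : B × S → ℝ} (hx : memP E fj x) {F : Finset (B × S)}
    (hF : F ⊆ E) : vsum x F ≤ fTot E fj F := by
  have hfiber : ∀ j, Ej E j ∩ F = F.filter (·.2 = j) := fun j => by
    ext e
    simp only [Ej, mem_inter, mem_filter]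
    exact ⟨fun h => ⟨h.2, h.1.2⟩, fun h => ⟨⟨hF h.1, h.2⟩, h.1⟩⟩
  calc vsum x F = ∑ j, vsum x (Ej E j ∩ F) := by
        simp only [hfiber, vsum, sum_fiberwise]
    _ ≤ fTot E fj F := sum_le_sum fun j _ => hx.2.2 j _ inter_subset_left

theorem fTot_eq_of_subset_Ej (h0 : ∀ j, fj j ∅ = 0) {j : S} {F : Finset (B × S)}
    (hF : F ⊆ Ej E j) : fTot E fj F = fj j F := by
  rw [fTot, sum_eq_single_of_mem j (mem_univ j) fun j' _ hj' => ?_, inter_eq_right.mpr hF]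
  convert h0 j'
  refine eq_empty_of_forall_notMem fun e he => hj' ?_
  obtain ⟨he', heF⟩ := mem_inter.mp he
  exact (mem_filter.mp he').2.symm.trans (mem_filter.mp (hF heF)).2

theorem fTot_isMonoSubmodular (hfj : ∀ j, IsMonoSubmodular (Ej E j) (fj j)) :
    IsMonoSubmodular E (fTot E fj) := by
  refine ⟨by simp [fTot, (hfj _).1], fun A C hAC _ => ?_, fun A C _ _ => ?_⟩
  · exact sum_le_sum fun j _ =>
      (hfj j).2.1 _ _ (inter_subset_inter_left hAC) inter_subset_left
  · simp only [fTot, ← sum_add_distrib]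
    refine sum_le_sum fun j _ => ?_
    rw [inter_inter_distrib_left, inter_union_distrib_left]
    exact (hfj j).2.2 _ _ inter_subset_left inter_subset_left

variable {w : B × S → ℝ}

theorem finite_fw_set (F : Finset (B × S)) :
    {r : ℝ | ∃ F', F ⊆ F' ∧ F' ⊆ E ∧ r = fTot E fj F' - vsum w F'}.Finite :=
  ((E.powerset : Set (Finset (B × S))).toFinite.image fun F' => fTot E fj F' - vsum w F').subset
    fun _ ⟨F', _, h₂, hr⟩ => ⟨F', by simpa using h₂, hr.symm⟩

theorem fw_le {F F' : Finset (B × S)} (h₁ : F ⊆ F') (h₂ : F' ⊆ E) :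
    fw E fj w F ≤ fTot E fj F' - vsum w F' :=
  csInf_le (finite_fw_set F).bddBelow ⟨F', h₁, h₂, rfl⟩

theorem exists_fw_eq {F : Finset (B × S)} (hF : F ⊆ E) :
    ∃ F', F ⊆ F' ∧ F' ⊆ E ∧ fw E fj w F = fTot E fj F' - vsum w F' := by
  have hfin := finite_fw_set (E := E) (fj := fj) (w := w) F
  refine Set.Nonempty.csInf_mem ?_ hfin
  exact ⟨_, E, hF, subset_rfl, rfl⟩

theorem le_fw {F : Finset (B × S)} (hF : F ⊆ E) {c : ℝ}
    (h : ∀ F', F ⊆ F' → F' ⊆ E → c ≤ fTot E fj F' - vsum w F') : c ≤ fw E fj w F := by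
  obtain ⟨F', h₁, h₂, hF'⟩ := exists_fw_eq (fj := fj) (w := w) hF
  exact hF' ▸ h F' h₁ h₂

theorem fw_isMonoSubmodular (hfj : ∀ j, IsMonoSubmodular (Ej E j) (fj j)) (hw : memP E fj w) :
    IsMonoSubmodular E (fw E fj w) := by
  have hf := fTot_isMonoSubmodular hfj
  refine ⟨le_antisymm ?_ ?_, fun A C hAC hC => ?_, fun A C hA hC => ?_⟩
  · simpa [hf.1, vsum] using fw_le (fj := fj) (w := w) (empty_subset ∅) (empty_subset E)
  · exact le_fw (empty_subset E) fun F' _ hF' => sub_nonneg.mpr (vsum_le_fTot_of_memP hw hF')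
  · exact le_fw hC fun F' h₁ h₂ => fw_le (hAC.trans h₁) h₂
  · obtain ⟨A', hAA', hA'E, hA'⟩ := exists_fw_eq (fj := fj) (w := w) hA
    obtain ⟨C', hCC', hC'E, hC'⟩ := exists_fw_eq (fj := fj) (w := w) hC
    have hinter := fw_le (fj := fj) (w := w) (inter_subset_inter hAA' hCC')
      (inter_subset_left.trans hA'E)
    have hunion := fw_le (fj := fj) (w := w) (union_subset_union hAA' hCC')
      (union_subset hA'E hC'E)
    have hsub := hf.2.2 A' C' hA'E hC'E
    have hmod : vsum w (A' ∪ C') + vsum w (A' ∩ C') = vsum w A' + vsum w C' := sum_union_inter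
    rw [hA', hC']
    linarith

theorem vsum_le_fw_of_memP_add {x : B × S → ℝ} (hx0 : ∀ e, 0 ≤ x e) (hwx : memP E fj (w + x))
    {F : Finset (B × S)} (hF : F ⊆ E) : vsum x F ≤ fw E fj w F :=
  le_fw hF fun F' h₁ h₂ => by
    have := vsum_le_fTot_of_memP hwx h₂
    rw [vsum_add] at this
    have hmono : vsum x F ≤ vsum x F' := sum_le_sum_of_subset_of_nonneg h₁ fun e _ _ => hx0 e
    linarith

theorem memP_add_of_vsum_le_fw (h0 : ∀ j, fj j ∅ = 0) (hw : memP E fj w) {x : B × S → ℝ}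
    (hx0 : ∀ e, 0 ≤ x e) (hxE : ∀ e ∉ E, x e = 0) (hx : ∀ F ⊆ E, vsum x F ≤ fw E fj w F) :
    memP E fj (w + x) := by
  refine ⟨fun e => add_nonneg (hw.1 e) (hx0 e), fun e he => by simp [hw.2.1 e he, hxE e he],
    fun j F hF => ?_⟩
  have hFE : F ⊆ E := hF.trans (filter_subset _ _)
  have := (hx F hFE).trans (fw_le subset_rfl hFE)
  rw [vsum_add, ← fTot_eq_of_subset_Ej h0 hF]
  linarith

theorem sum_le_of_mem_PiWd {d : B → ℝ} {i : B} {ξ : B × S → ℝ} {u : B → ℝ}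
    (hu : u ∈ PiWd E fj w d i ξ) {Y Z : Finset B} (hiY : i ∉ Y) (hZY : Z ⊆ Y)
    {F : Finset (B × S)} (hF : F ⊆ Ei E i) :
    ∑ k ∈ Y, u k ≤ fw E fj w (EX E Z ∪ F) + ∑ k ∈ Y \ Z, d k - vsum ξ F := by
  obtain ⟨-, -, x, ⟨hx0, -, hwx, hxd⟩, hxξ, hxu⟩ := hu
  have hne : ∀ k ∈ Y, k ≠ i := fun k hk hki => hiY (hki ▸ hk)
  have hdisj : Disjoint (EX E Z) F := disjoint_left.mpr fun e he heF =>
    hne e.1 (hZY (mem_filter.mp he).2) (mem_filter.mp (hF heF)).2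
  have hZ : ∑ k ∈ Z, u k = vsum x (EX E Z) := by
    rw [vsum_EX]
    exact sum_congr rfl fun k hk => (hxu k (hne k (hZY hk))).symm
  have hYZ : ∑ k ∈ Y \ Z, u k ≤ ∑ k ∈ Y \ Z, d k := sum_le_sum fun k hk =>
    hxu k (hne k (mem_sdiff.mp hk).1) ▸ hxd k
  have hFξ : vsum x F = vsum ξ F := sum_congr rfl fun e he => hxξ e (hF he)
  have hEX : EX E Z ⊆ E := filter_subset _ _
  have hEi : Ei E i ⊆ E := filter_subset _ _
  have hfw := vsum_le_fw_of_memP_add hx0 hwx (union_subset hEX (hF.trans hEi))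
  have hunion : vsum x (EX E Z ∪ F) = vsum x (EX E Z) + vsum x F := sum_union hdisj
  rw [← sum_sdiff hZY]
  linarith

theorem mem_PiWd_of_le_fw [Fintype B] (hfj : ∀ j, IsMonoSubmodular (Ej E j) (fj j))
    (hw : memP E fj w) {d : B → ℝ} {i : B} {ξ : B × S → ℝ} (hξ0 : ∀ e ∈ Ei E i, 0 ≤ ξ e)
    (hξd : vsum ξ (Ei E i) ≤ d i) {u : B → ℝ} (hu0 : ∀ k, 0 ≤ u k) (hui : u i = 0)
    (hud : ∀ k, k ≠ i → u k ≤ d k)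
    (huξ : ∀ Y : Finset B, i ∉ Y → ∀ F ⊆ Ei E i,
      ∑ k ∈ Y, u k + vsum ξ F ≤ fw E fj w (EX E Y ∪ F)) :
    u ∈ PiWd E fj w d i ξ := by
  set y : B ⊕ (B × S) → ℝ := Sum.elim u fun e => if e ∈ Ei E i then ξ e else 0
  have hy0 : ∀ t, 0 ≤ y t := by
    rintro (k | e)
    · exact hu0 k
    · by_cases he : e ∈ Ei E i <;> simp [y, he, hξ0]
  have hyfw : ∀ T, ∑ t ∈ T, y t ≤ fw E fj w (E.filter (blockOf i · ∈ T)) := fun T => by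
    have hsum : ∑ t ∈ T, y t = ∑ k ∈ T.toLeft.erase i, u k + vsum ξ (T.toRight ∩ Ei E i) := by
      conv_lhs => rw [← toLeft_disjSum_toRight (u := T)]
      rw [sum_disjSum, sum_erase _ hui]
      simp [y, vsum]
    rw [hsum, filter_blockOf_mem]
    exact huξ _ (notMem_erase i _) _ inter_subset_right
  obtain ⟨x, hx0, hxE, hxfw, hxy⟩ :=
    (fw_isMonoSubmodular hfj hw).exists_sum_filter_eq hy0 hyfw
  have hxi : ∀ e ∈ Ei E i, x e = ξ e := fun e he => by
    simpa [filter_blockOf_eq_inr he, y, he] using hxy (.inr e)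
  have hxk : ∀ k, k ≠ i → vsum x (Ei E k) = u k := fun k hk => by
    simpa [filter_blockOf_eq_inl hk, y, vsum] using hxy (.inl k)
  refine ⟨hui, hu0, x, ⟨hx0, hxE, memP_add_of_vsum_le_fw (fun j => (hfj j).1) hw hx0 hxE hxfw,
    fun k => ?_⟩, hxi, hxk⟩
  rcases eq_or_ne k i with rfl | hk
  · rwa [vsum, sum_congr rfl hxi]
  · exact (hxk k hk).trans_le (hud k hk)

end Market

variable {B S : Type*} [Fintype B] [Fintype S] [DecidableEq B] [DecidableEq S]

/-- membership in `P^i_{w,d}(ξ)` is characterized by the inequalities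
`u(Y) ≤ min_{Z ⊆ Y, F ⊆ E_i} (f_w(E_Z ∪ F) + d(Y \ Z) - ξ(F))`. -/
theorem mem_PiWd_iff
    (E : Finset (B × S)) (fj : S → Finset (B × S) → ℝ)
    (hfj : ∀ j : S, IsMonoSubmodular (Ej E j) (fj j))
    (w : B × S → ℝ) (hw : memP E fj w)
    (d : B → ℝ)
    (i : B) (ξ : B × S → ℝ) (hξ0 : ∀ e, 0 ≤ ξ e)
    (hξd : vsum ξ (Ei E i) ≤ d i)
    (u : B → ℝ) (hu0 : ∀ k, 0 ≤ u k) (hui : u i = 0) :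
    u ∈ PiWd E fj w d i ξ ↔
      ∀ Y ⊆ Finset.univ.erase i,
        ∑ k ∈ Y, u k ≤
          (Y.powerset ×ˢ (Ei E i).powerset).inf'
            ⟨(∅, ∅), by simp⟩
            (fun p => fw E fj w (EX E p.1 ∪ p.2) + ∑ k ∈ Y \ p.1, d k - vsum ξ p.2) := by
  have hYi : ∀ Y : Finset B, Y ⊆ univ.erase i ↔ i ∉ Y := fun Y => by
    simp [subset_iff]
  have hinf : ∀ Y : Finset B, (∑ k ∈ Y, u k ≤
      (Y.powerset ×ˢ (Ei E i).powerset).inf' ⟨(∅, ∅), by simp⟩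
        fun p => fw E fj w (EX E p.1 ∪ p.2) + ∑ k ∈ Y \ p.1, d k - vsum ξ p.2) ↔
      ∀ Z F, Z ⊆ Y → F ⊆ Ei E i →
        ∑ k ∈ Y, u k ≤ fw E fj w (EX E Z ∪ F) + ∑ k ∈ Y \ Z, d k - vsum ξ F :=
    fun Y => (le_inf'_iff _ _).trans (by simp)
  simp only [hinf]
  refine ⟨fun hu Y hY Z F hZ hF => sum_le_of_mem_PiWd hu ((hYi Y).mp hY) hZ hF, fun h => ?_⟩
  refine mem_PiWd_of_le_fw hfj hw (fun e _ => hξ0 e) hξd hu0 hui (fun k hk => ?_)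
    fun Y hY F hF => ?_
  · simpa [EX, (fw_isMonoSubmodular hfj hw).1, vsum] using
      h {k} (by simpa using hk) ∅ ∅ (empty_subset _) (empty_subset _)
  · have := h Y ((hYi Y).mpr hY) Y F subset_rfl hF
    rw [sdiff_self, bot_eq_empty, sum_empty] at this
    linarith

end TwoSidedMarket
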